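/- arXiv:1501.00458 — 2 statements merged into one kernel-verified Lean document; each statement's English description precedes it below -/
import Mathlib

section
/- Arrow's Impossibility Theorem: for at least three candidates and finitely many voters, every constitution mapping profiles of strict linear orders to strict linear orders that respects unanimity and independence of irrelevant alternatives is a dictatorship, i.e., there exists a voter i such that for every profile and every pair (a,b), society ranks a above b iff voter i does. -/
/-!
Call a coalition decisive if society follows it on a pair whenever all its members agree on
that pair. By IIA, a coalition that wins a single pair against unanimous opposition wins every
pair: a third candidate `c` lets one build profiles, agreeing with any given one on the pair in
question, in which Pareto and transitivity chain the known pair to the new one. Splitting a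
decisive coalition in two and evaluating the cyclic profile `a ≻ b ≻ c`, `c ≻ a ≻ b`,
`b ≻ c ≻ a` shows that one of the parts is decisive. The electorate is decisive by Pareto, so a
minimal decisive coalition exists; it is nonempty, hence a singleton, whose member is a dictator.
-/

open Function Set

namespace SocialChoice

variable {ι α : Type*}

section Ranking

open Classical

/-- Ranks the entries of `l` first, in order; every `x ∉ l` has `l.idxOf x = l.length`, and ties
among those are broken by `WellOrderingRel`. -/
def listRanking (l : List α) : α → α → Prop :=
  Prod.Lex (· < ·) WellOrderingRel on fun x => (l.idxOf x, x)

instance (l : List α) : IsStrictTotalOrder α (listRanking l) :=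
  (LeftInverse.injective (g := Prod.snd) fun _ => rfl).isStrictTotalOrder_onFun _

theorem listRanking_of_idxOf_lt {l : List α} {x y : α} (h : l.idxOf x < l.idxOf y) :
    listRanking l x y :=
  Prod.Lex.left _ _ h

end Ranking

theorem exists_triple_ne_of_three_le (h3 : 3 ≤ ENat.card α) :
    ∃ a b c : α, a ≠ b ∧ c ≠ a ∧ c ≠ b := by
  obtain ⟨a⟩ := (ENat.card_pos_iff_nonempty α).1 (lt_of_lt_of_le (by norm_num) h3)
  obtain ⟨b, hba, -⟩ := ENat.exists_ne_ne_of_three_le h3 a a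
  obtain ⟨c, hca, hcb⟩ := ENat.exists_ne_ne_of_three_le h3 a b
  exact ⟨a, b, c, hba.symm, hca, hcb⟩

def IsProfile (P : ι → α → α → Prop) : Prop := ∀ i, IsStrictTotalOrder α (P i)

structure IsArrovian (F : (ι → α → α → Prop) → α → α → Prop) : Prop where
  isStrictTotalOrder : ∀ P, IsProfile P → IsStrictTotalOrder α (F P)
  pareto : ∀ P, IsProfile P → ∀ a b, (∀ i, P i a b) → F P a b
  iia : ∀ P Q, IsProfile P → IsProfile Q →
    ∀ a b, (∀ i, P i a b ↔ Q i a b) → (F P a b ↔ F Q a b)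

section Decisive

variable (F : (ι → α → α → Prop) → α → α → Prop)

def IsDecisiveOver (S : Set ι) (a b : α) : Prop :=
  ∀ P, IsProfile P → (∀ i ∈ S, P i a b) → F P a b

def IsAlmostDecisiveOver (S : Set ι) (a b : α) : Prop :=
  ∀ P, IsProfile P → (∀ i ∈ S, P i a b) → (∀ i ∉ S, P i b a) → F P a b

def IsDecisive (S : Set ι) : Prop := ∀ a b, a ≠ b → IsDecisiveOver F S a b

variable {F}

theorem IsDecisiveOver.isAlmostDecisiveOver {S : Set ι} {a b : α}
    (hD : IsDecisiveOver F S a b) : IsAlmostDecisiveOver F S a b :=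
  fun P hP hS _ => hD P hP hS

end Decisive

namespace IsArrovian

variable {F : (ι → α → α → Prop) → α → α → Prop} (hF : IsArrovian F) {S : Set ι} {a b c : α}
include hF

theorem isAlmostDecisiveOver_of_profile {Q : ι → α → α → Prop} (hQ : IsProfile Q)
    (hS : ∀ i ∈ S, Q i a b) (hSc : ∀ i ∉ S, Q i b a) (hFQ : F Q a b) :
    IsAlmostDecisiveOver F S a b := by
  intro P hP hPS hPSc
  refine (hF.iia P Q hP hQ a b fun i => ?_).2 hFQ
  by_cases hi : i ∈ S
  · exact iff_of_true (hPS i hi) (hS i hi)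
  · have := hP i
    have := hQ i
    exact iff_of_false (asymm (hPSc i hi)) (asymm (hSc i hi))

theorem isDecisiveOver_replace_snd (hD : IsAlmostDecisiveOver F S a b) (hab : a ≠ b)
    (hca : c ≠ a) (hcb : c ≠ b) : IsDecisiveOver F S a c := by
  classical
  have hne : a ≠ b ∧ b ≠ a ∧ a ≠ c ∧ c ≠ a ∧ b ≠ c ∧ c ≠ b :=
    ⟨hab, hab.symm, hca.symm, hca, hcb.symm, hcb⟩
  intro P hP hPS
  -- `Q` agrees with `P` on `a` versus `c`, pits `S` against everyone else on `a` versus `b`,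
  -- and is unanimous on `b ≻ c`.
  let Q : ι → α → α → Prop := fun i => listRanking
    (if i ∈ S then [a, b, c] else if P i a c then [b, a, c] else [b, c, a])
  have hQ : IsProfile Q := fun _ => inferInstance
  have := hF.isStrictTotalOrder Q hQ
  have hFab : F Q a b := hD Q hQ
    (fun i hi => listRanking_of_idxOf_lt (by simp [List.idxOf_cons_ne, hi, hne]))
    (fun i hi => listRanking_of_idxOf_lt (by split_ifs <;> simp [List.idxOf_cons_ne, hne]))
  have hFbc : F Q b c := hF.pareto Q hQ b c fun i =>
    listRanking_of_idxOf_lt (by split_ifs <;> simp [List.idxOf_cons_ne, hne])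
  refine (hF.iia P Q hP hQ a c fun i => ?_).2 (_root_.trans hFab hFbc)
  have := hP i
  by_cases hi : i ∈ S
  · exact iff_of_true (hPS i hi) (listRanking_of_idxOf_lt (by simp [List.idxOf_cons_ne, hi, hne]))
  by_cases hPi : P i a c
  · exact iff_of_true hPi (listRanking_of_idxOf_lt (by simp [List.idxOf_cons_ne, hi, hPi, hne]))
  · exact iff_of_false hPi
      (asymm (listRanking_of_idxOf_lt (by simp [List.idxOf_cons_ne, hi, hPi, hne])))

theorem isDecisiveOver_replace_fst (hD : IsAlmostDecisiveOver F S a b) (hab : a ≠ b)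
    (hca : c ≠ a) (hcb : c ≠ b) : IsDecisiveOver F S c b := by
  classical
  have hne : a ≠ b ∧ b ≠ a ∧ a ≠ c ∧ c ≠ a ∧ b ≠ c ∧ c ≠ b :=
    ⟨hab, hab.symm, hca.symm, hca, hcb.symm, hcb⟩
  intro P hP hPS
  let Q : ι → α → α → Prop := fun i => listRanking
    (if i ∈ S then [c, a, b] else if P i c b then [c, b, a] else [b, c, a])
  have hQ : IsProfile Q := fun _ => inferInstance
  have := hF.isStrictTotalOrder Q hQ
  have hFab : F Q a b := hD Q hQ
    (fun i hi => listRanking_of_idxOf_lt (by simp [List.idxOf_cons_ne, hi, hne]))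
    (fun i hi => listRanking_of_idxOf_lt (by split_ifs <;> simp [List.idxOf_cons_ne, hne]))
  have hFca : F Q c a := hF.pareto Q hQ c a fun i =>
    listRanking_of_idxOf_lt (by split_ifs <;> simp [List.idxOf_cons_ne, hne])
  refine (hF.iia P Q hP hQ c b fun i => ?_).2 (_root_.trans hFca hFab)
  have := hP i
  by_cases hi : i ∈ S
  · exact iff_of_true (hPS i hi) (listRanking_of_idxOf_lt (by simp [List.idxOf_cons_ne, hi, hne]))
  by_cases hPi : P i c b
  · exact iff_of_true hPi (listRanking_of_idxOf_lt (by simp [List.idxOf_cons_ne, hi, hPi, hne]))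
  · exact iff_of_false hPi
      (asymm (listRanking_of_idxOf_lt (by simp [List.idxOf_cons_ne, hi, hPi, hne])))

theorem isDecisiveOver_snd (h3 : 3 ≤ ENat.card α) (hD : IsAlmostDecisiveOver F S a b)
    (hab : a ≠ b) {y : α} (hya : y ≠ a) : IsDecisiveOver F S a y := by
  obtain ⟨c, hca, hcb⟩ := ENat.exists_ne_ne_of_three_le h3 a b
  have hDac := hF.isDecisiveOver_replace_snd hD hab hca hcb
  by_cases hyb : y = b
  · subst hyb
    exact hF.isDecisiveOver_replace_snd hDac.isAlmostDecisiveOver hca.symm hya hcb.symm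
  · exact hF.isDecisiveOver_replace_snd hD hab hya hyb

theorem isDecisiveOver_fst (h3 : 3 ≤ ENat.card α) (hD : IsAlmostDecisiveOver F S a b)
    (hab : a ≠ b) {x : α} (hxb : x ≠ b) : IsDecisiveOver F S x b := by
  obtain ⟨c, hca, hcb⟩ := ENat.exists_ne_ne_of_three_le h3 a b
  have hDcb := hF.isDecisiveOver_replace_fst hD hab hca hcb
  by_cases hxa : x = a
  · subst hxa
    exact hF.isDecisiveOver_replace_fst hDcb.isAlmostDecisiveOver hcb hca.symm hxb
  · exact hF.isDecisiveOver_replace_fst hD hab hxa hxb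

theorem isDecisive_of_isAlmostDecisiveOver (h3 : 3 ≤ ENat.card α)
    (hD : IsAlmostDecisiveOver F S a b) (hab : a ≠ b) : IsDecisive F S := by
  intro x y hxy
  by_cases hxb : x = b
  · subst hxb
    obtain ⟨c, hca, hcx⟩ := ENat.exists_ne_ne_of_three_le h3 a x
    have hDac := hF.isDecisiveOver_snd h3 hD hab hca
    have hDxc := hF.isDecisiveOver_fst h3 hDac.isAlmostDecisiveOver hca.symm hcx.symm
    exact hF.isDecisiveOver_snd h3 hDxc.isAlmostDecisiveOver hcx.symm hxy.symm
  · have hDxb := hF.isDecisiveOver_fst h3 hD hab hxb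
    exact hF.isDecisiveOver_snd h3 hDxb.isAlmostDecisiveOver hxb hxy.symm

theorem isDecisive_univ : IsDecisive F (univ : Set ι) :=
  fun a b _ P hP hPS => hF.pareto P hP a b fun i => hPS i (mem_univ i)

theorem not_isDecisiveOver_empty (hab : a ≠ b) : ¬ IsDecisiveOver F (∅ : Set ι) a b := by
  classical
  intro hD
  let P : ι → α → α → Prop := fun _ => listRanking [b]
  have hP : IsProfile P := fun _ => inferInstance
  have := hF.isStrictTotalOrder P hP
  exact asymm (hD P hP (by simp)) (hF.pareto P hP b a fun _ =>
    listRanking_of_idxOf_lt (by simp [hab]))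

theorem isDecisive_or_isDecisive_of_disjoint (h3 : 3 ≤ ENat.card α) {T : Set ι}
    (hST : Disjoint S T) (hD : IsDecisive F (S ∪ T)) : IsDecisive F S ∨ IsDecisive F T := by
  classical
  obtain ⟨a, b, c, hab, hca, hcb⟩ := exists_triple_ne_of_three_le h3
  have hne : a ≠ b ∧ b ≠ a ∧ a ≠ c ∧ c ≠ a ∧ b ≠ c ∧ c ≠ b :=
    ⟨hab, hab.symm, hca.symm, hca, hcb.symm, hcb⟩
  let Q : ι → α → α → Prop := fun i => listRanking
    (if i ∈ S then [a, b, c] else if i ∈ T then [c, a, b] else [b, c, a])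
  have hQ : IsProfile Q := fun _ => inferInstance
  have := hF.isStrictTotalOrder Q hQ
  have hFab : F Q a b := hD a b hab Q hQ fun i hi => listRanking_of_idxOf_lt (by
    rcases hi with hi | hi
    · simp [List.idxOf_cons_ne, hi, hne]
    · simp [List.idxOf_cons_ne, hi, hST.notMem_of_mem_right hi, hne])
  rcases trichotomous_of (F Q) a c with hFac | rfl | hFca
  · refine .inl (hF.isDecisive_of_isAlmostDecisiveOver h3
      (hF.isAlmostDecisiveOver_of_profile hQ (fun i hi => ?_) (fun i hi => ?_) hFac) hca.symm)
    · exact listRanking_of_idxOf_lt (by simp [List.idxOf_cons_ne, hi, hne])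
    · exact listRanking_of_idxOf_lt (by split_ifs <;> simp [List.idxOf_cons_ne, hne])
  · exact absurd rfl hca
  · refine .inr (hF.isDecisive_of_isAlmostDecisiveOver h3
      (hF.isAlmostDecisiveOver_of_profile hQ (fun i hi => ?_) (fun i hi => ?_)
        (_root_.trans hFca hFab)) hcb)
    · exact listRanking_of_idxOf_lt
        (by simp [List.idxOf_cons_ne, hi, hST.notMem_of_mem_right hi, hne])
    · exact listRanking_of_idxOf_lt (by split_ifs <;> simp [List.idxOf_cons_ne, hne])

theorem exists_isDecisive_singleton [Finite ι] (h3 : 3 ≤ ENat.card α) :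
    ∃ i, IsDecisive F ({i} : Set ι) := by
  obtain ⟨M, hM⟩ := exists_minimal_of_wellFoundedLT (IsDecisive F) ⟨univ, hF.isDecisive_univ⟩
  obtain ⟨a, b, -, hab, -⟩ := exists_triple_ne_of_three_le h3
  obtain ⟨i, hi⟩ : M.Nonempty := nonempty_iff_ne_empty.2 fun hM0 =>
    hF.not_isDecisiveOver_empty hab (hM0 ▸ hM.prop a b hab)
  have hsplit : IsDecisive F ({i} ∪ M \ {i}) := by
    rw [union_sdiff_cancel (singleton_subset_iff.2 hi)]
    exact hM.prop
  exact ⟨i, (hF.isDecisive_or_isDecisive_of_disjoint h3 disjoint_sdiff_right hsplit).resolve_right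
    (hM.not_prop_of_lt (sdiff_singleton_ssubset.2 hi))⟩

theorem eq_of_isDecisive_singleton {i : ι} (hi : IsDecisive F {i}) {P : ι → α → α → Prop}
    (hP : IsProfile P) : F P = P i := by
  have := hP i
  have := hF.isStrictTotalOrder P hP
  have hdict : ∀ a b, P i a b → F P a b := fun a b hab =>
    hi a b (ne_of_irrefl hab) P hP fun j hj => (mem_singleton_iff.1 hj) ▸ hab
  ext a b
  refine ⟨fun hFab => ?_, hdict a b⟩
  rcases trichotomous_of (P i) a b with h | rfl | h
  · exact h
  · exact absurd hFab (irrefl a)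
  · exact absurd (hdict b a h) (asymm hFab)

end IsArrovian

end SocialChoice

/-- Arrow's Impossibility Theorem: for at least three candidates and finitely many
voters, every constitution mapping profiles of strict linear orders to strict linear
orders that respects unanimity and independence of irrelevant alternatives is a
dictatorship. -/
theorem arrow_impossibility {α : Type*} [Fintype α] (hcard : 3 ≤ Fintype.card α)
    {N : ℕ}
    (F : (Fin N → α → α → Prop) → (α → α → Prop))
    (hF : ∀ P : Fin N → α → α → Prop,
      (∀ i, IsStrictTotalOrder α (P i)) → IsStrictTotalOrder α (F P))
    (hUnan : ∀ P : Fin N → α → α → Prop,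
      (∀ i, IsStrictTotalOrder α (P i)) →
      ∀ a b : α, (∀ i, P i a b) → F P a b)
    (hIIA : ∀ P Q : Fin N → α → α → Prop,
      (∀ i, IsStrictTotalOrder α (P i)) → (∀ i, IsStrictTotalOrder α (Q i)) →
      ∀ a b : α, (∀ i, P i a b ↔ Q i a b) → (F P a b ↔ F Q a b)) :
    ∃ i : Fin N, ∀ P : Fin N → α → α → Prop,
      (∀ j, IsStrictTotalOrder α (P j)) →
      ∀ a b : α, (F P a b ↔ P i a b) := by
  have hArrow : SocialChoice.IsArrovian F := ⟨hF, hUnan, hIIA⟩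
  have h3 : 3 ≤ ENat.card α := by simpa [ENat.card_eq_coe_fintype_card] using hcard
  obtain ⟨i, hi⟩ := hArrow.exists_isDecisive_singleton h3
  exact ⟨i, fun P hP a b => by rw [hArrow.eq_of_isDecisive_singleton hi hP]⟩
end

section
/- The quantum majority rule constitution applied to the cyclic profile {(a>b>c), (c>a>b), (b>c>a)} outputs the uniform distribution over all six strict linear orders of {a,b,c}; in particular, the output's support strictly contains each individual voter's preference, so no voter is a dictator. -/
open scoped Classical

/-- Voter 1's preference: a > b > c (a = 0, b = 1, c = 2). -/
def vote1 : Fin 3 → Fin 3 → Prop := fun x y => (x = 0 ∧ y ≠ 0) ∨ (x = 1 ∧ y = 2)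

/-- Voter 2's preference: c > a > b. -/
def vote2 : Fin 3 → Fin 3 → Prop := fun x y => (x = 2 ∧ y ≠ 2) ∨ (x = 0 ∧ y = 1)

/-- Voter 3's preference: b > c > a. -/
def vote3 : Fin 3 → Fin 3 → Prop := fun x y => (x = 1 ∧ y ≠ 1) ∨ (x = 2 ∧ y = 0)

/-- The cyclic profile {(a>b>c), (c>a>b), (b>c>a)}. -/
def profile : Fin 3 → Fin 3 → Fin 3 → Prop := ![vote1, vote2, vote3]

/-- Number of voters ranking `x` above `y`. -/
noncomputable def voteCount (x y : Fin 3) : ℕ :=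
  (Finset.univ.filter fun i => profile i x y).card

/-- The QMR digraph: edge `x → y` iff at least as many voters rank `x` above `y`
as rank `y` above `x`. -/
noncomputable def qmrEdge (x y : Fin 3) : Prop := voteCount y x ≤ voteCount x y

/-- Same strongly connected component of the QMR digraph. -/
def SameSCC (u v : Fin 3) : Prop :=
  Relation.ReflTransGen qmrEdge u v ∧ Relation.ReflTransGen qmrEdge v u

/-- A strict linear order, encoded by a permutation `σ` (ranking `x` above `y` iff
`σ x < σ y`), is consistent with the QMR output: it respects the topological order
on distinct strongly connected components and every unanimous pairwise
preference. -/
noncomputable def consistent (σ : Equiv.Perm (Fin 3)) : Prop :=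
  (∀ x y, qmrEdge x y → ¬ SameSCC x y → σ x < σ y) ∧
  (∀ x y, (∀ i, profile i x y) → σ x < σ y)

/-- The QMR output distribution: uniform over the consistent strict linear orders. -/
noncomputable def qmrDist (σ : Equiv.Perm (Fin 3)) : ℚ :=
  if consistent σ then ((Finset.univ.filter fun τ => consistent τ).card : ℚ)⁻¹ else 0

lemma edge01 : qmrEdge 0 1 := by
  unfold qmrEdge voteCount
  rw [show (Finset.univ.filter fun i => profile i 0 1) = {0,1} from by
      ext i; fin_cases i <;> simp [profile, vote1, vote2, vote3, Matrix.vecHead, Matrix.vecTail],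
    show (Finset.univ.filter fun i => profile i 1 0) = {2} from by
      ext i; fin_cases i <;> simp [profile, vote1, vote2, vote3, Matrix.vecHead, Matrix.vecTail]]
  norm_num

lemma edge12 : qmrEdge 1 2 := by
  unfold qmrEdge voteCount
  rw [show (Finset.univ.filter fun i => profile i 1 2) = {0,2} from by
      ext i; fin_cases i <;> simp [profile, vote1, vote2, vote3, Matrix.vecHead, Matrix.vecTail],
    show (Finset.univ.filter fun i => profile i 2 1) = {1} from by
      ext i; fin_cases i <;> simp [profile, vote1, vote2, vote3, Matrix.vecHead, Matrix.vecTail]]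
  norm_num

lemma edge20 : qmrEdge 2 0 := by
  unfold qmrEdge voteCount
  rw [show (Finset.univ.filter fun i => profile i 2 0) = {1,2} from by
      ext i; fin_cases i <;> simp [profile, vote1, vote2, vote3, Matrix.vecHead, Matrix.vecTail],
    show (Finset.univ.filter fun i => profile i 0 2) = {0} from by
      ext i; fin_cases i <;> simp [profile, vote1, vote2, vote3, Matrix.vecHead, Matrix.vecTail]]
  norm_num

open Relation in
lemma scc_all (u v : Fin 3) : SameSCC u v := by
  have r01 : ReflTransGen qmrEdge 0 1 := ReflTransGen.single edge01
  have r12 : ReflTransGen qmrEdge 1 2 := ReflTransGen.single edge12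
  have r20 : ReflTransGen qmrEdge 2 0 := ReflTransGen.single edge20
  have r02 : ReflTransGen qmrEdge 0 2 := r01.trans r12
  have r10 : ReflTransGen qmrEdge 1 0 := r12.trans r20
  have r21 : ReflTransGen qmrEdge 2 1 := r20.trans r01
  fin_cases u <;> fin_cases v <;>
    exact ⟨by first | exact ReflTransGen.refl | assumption,
           by first | exact ReflTransGen.refl | assumption⟩

lemma no_unan (x y : Fin 3) : ¬ ∀ i, profile i x y := by
  intro h
  have h0 := h 0; have h1 := h 1; have h2 := h 2
  fin_cases x <;> fin_cases y <;> simp [profile, vote1, vote2, vote3, Matrix.vecHead, Matrix.vecTail] at h0 h1 h2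

lemma consistent_all (σ : Equiv.Perm (Fin 3)) : consistent σ :=
  ⟨fun x y _ hn => absurd (scc_all x y) hn, fun x y h => absurd h (no_unan x y)⟩

lemma dist_eq (σ : Equiv.Perm (Fin 3)) : qmrDist σ = 1 / 6 := by
  unfold qmrDist
  rw [if_pos (consistent_all σ),
    Finset.filter_true_of_mem (fun τ _ => consistent_all τ)]
  norm_num [Fintype.card_perm, Nat.factorial]

/-- QMR applied to the cyclic profile {(a>b>c), (c>a>b), (b>c>a)} outputs the
uniform distribution over all six strict linear orders; the support strictly
contains each voter's preference, and no voter is a dictator. -/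
theorem qmr_cyclic_uniform_no_dictator :
    (∀ σ : Equiv.Perm (Fin 3), qmrDist σ = 1 / 6) ∧
    (∀ i : Fin 3, ∃ σ : Equiv.Perm (Fin 3),
      (∀ x y, σ x < σ y ↔ profile i x y) ∧ qmrDist σ ≠ 0) ∧
    (∀ i : Fin 3, ∃ σ : Equiv.Perm (Fin 3),
      qmrDist σ ≠ 0 ∧ ¬ (∀ x y, σ x < σ y ↔ profile i x y)) ∧
    ¬ ∃ i : Fin 3, ∀ x y : Fin 3,
        (∃ σ : Equiv.Perm (Fin 3), qmrDist σ ≠ 0 ∧ σ x < σ y) ↔ profile i x y := by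
  have hne : ∀ σ : Equiv.Perm (Fin 3), qmrDist σ ≠ 0 := by
    intro σ; rw [dist_eq]; norm_num
  refine ⟨dist_eq, ?_, ?_, ?_⟩
  · intro i
    fin_cases i
    · exact ⟨Equiv.refl _, fun x y => by
        fin_cases x <;> fin_cases y <;>
          simp [profile, vote1, vote2, vote3, Matrix.vecHead, Matrix.vecTail], hne _⟩
    · exact ⟨finRotate 3, fun x y => by
        fin_cases x <;> fin_cases y <;>
          simp [profile, vote1, vote2, vote3, Matrix.vecHead, Matrix.vecTail] <;> decide, hne _⟩
    · exact ⟨(finRotate 3)⁻¹, fun x y => by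
        fin_cases x <;> fin_cases y <;>
          simp [profile, vote1, vote2, vote3, Matrix.vecHead, Matrix.vecTail] <;> decide, hne _⟩
  · intro i
    fin_cases i
    · refine ⟨finRotate 3, hne _, fun h => ?_⟩
      have := (h 0 2).mpr (by simp [profile, vote1])
      revert this; decide
    · refine ⟨Equiv.refl _, hne _, fun h => ?_⟩
      have := (h 2 1).mpr (by simp [profile, vote1, vote2, Matrix.vecHead, Matrix.vecTail])
      revert this; decide
    · refine ⟨Equiv.refl _, hne _, fun h => ?_⟩
      have := (h 1 0).mpr (by simp [profile, vote1, vote2, vote3, Matrix.vecHead, Matrix.vecTail])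
      revert this; decide
  · rintro ⟨i, h⟩
    fin_cases i
    · have := (h 1 0).mp ⟨Equiv.swap 0 1, hne _, by decide⟩
      simp [profile, vote1] at this
    · have := (h 1 0).mp ⟨Equiv.swap 0 1, hne _, by decide⟩
      simp [profile, vote1, vote2, Matrix.vecHead, Matrix.vecTail] at this
    · have := (h 0 1).mp ⟨Equiv.refl _, hne _, by decide⟩
      simp [profile, vote1, vote2, vote3, Matrix.vecHead, Matrix.vecTail] at this
end
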